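/- Let N ≥ 4 and j ∈ ℕ. For functions of x define the operators (Δ_[0] y)(x) = x y''(x) + (5/2) y'(x), (Δ_[1] y)(x) = (1-x) y''(x) - (N/2) y'(x), (Ḋ_[0] y)(x) = √x · y'(x), (Ḋ_[1] y)(x) = -√(1-x) · y'(x), the base norms ‖y‖_{𝔛_[0]} = (∫₀^{2/3} y(x)² x^{3/2} dx)^{1/2} and ‖y‖_{𝔛_[1]} = (∫_{1/3}^{1} y(x)² (1-x)^{N/2-1} dx)^{1/2}, and the graded norms ‖y‖_{𝔛_[μ]^j} = (Σ_{ℓ≤j} ⟨y⟩_{[μ]ℓ}²)^{1/2} where ⟨y⟩_{[μ]2m} = ‖Δ_[μ]^m y‖_{𝔛_[μ]} and ⟨y⟩_{[μ]2m+1} = ‖Ḋ_[μ] Δ_[μ]^m y‖_{𝔛_[μ]}. Then there exists a constant C > 0 such that for every y ∈ C^∞((0,1)) whose support is contained in [1/3, 2/3], one has ‖y‖_{𝔛_[0]^j} ≤ C ‖y‖_{𝔛_[1]^j}. -/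

import Mathlib

open Real MeasureTheory Set Filter Topology

/-- `Δ_[0] y = x y'' + (5/2) y'`. -/
noncomputable def Delta0 (y : ℝ → ℝ) : ℝ → ℝ := fun x =>
  x * deriv (deriv y) x + (5/2) * deriv y x

/-- `Δ_[1] y = (1-x) y'' - (N/2) y'` (i.e. `z y'' + (N/2) y'` with `z = 1-x`). -/
noncomputable def Delta1 (N : ℝ) (y : ℝ → ℝ) : ℝ → ℝ := fun x =>
  (1-x) * deriv (deriv y) x - (N/2) * deriv y x

/-- `Ḋ_[0] y = √x · y'`. -/
noncomputable def Ddot0 (y : ℝ → ℝ) : ℝ → ℝ := fun x => Real.sqrt x * deriv y x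

/-- `Ḋ_[1] y = -√(1-x) · y'`. -/
noncomputable def Ddot1 (y : ℝ → ℝ) : ℝ → ℝ := fun x => -Real.sqrt (1-x) * deriv y x

/-- Base norm `‖y‖_{𝔛_[0]} = (∫₀^{2/3} y² x^{3/2} dx)^{1/2}`. -/
noncomputable def base0 (y : ℝ → ℝ) : ℝ :=
  Real.sqrt (∫ x in (0:ℝ)..(2/3), y x^2 * x ^ ((3:ℝ)/2))

/-- Base norm `‖y‖_{𝔛_[1]} = (∫_{1/3}^1 y² (1-x)^{N/2-1} dx)^{1/2}`. -/
noncomputable def base1 (N : ℝ) (y : ℝ → ℝ) : ℝ :=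
  Real.sqrt (∫ x in (1/3:ℝ)..1, y x^2 * (1-x) ^ (N/2 - 1))

/-- Seminorm `⟨y⟩_{[0]ℓ}`: `‖Δ_[0]^m y‖` for `ℓ = 2m`, `‖Ḋ_[0] Δ_[0]^m y‖` for `ℓ = 2m+1`. -/
noncomputable def bra0 (ℓ : ℕ) (y : ℝ → ℝ) : ℝ :=
  if Even ℓ then base0 (Delta0^[ℓ/2] y) else base0 (Ddot0 (Delta0^[ℓ/2] y))

/-- Seminorm `⟨y⟩_{[1]ℓ}`: `‖Δ_[1]^m y‖` for `ℓ = 2m`, `‖Ḋ_[1] Δ_[1]^m y‖` for `ℓ = 2m+1`. -/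
noncomputable def bra1 (N : ℝ) (ℓ : ℕ) (y : ℝ → ℝ) : ℝ :=
  if Even ℓ then base1 N ((Delta1 N)^[ℓ/2] y) else base1 N (Ddot1 ((Delta1 N)^[ℓ/2] y))

/-- Graded norm `‖y‖_{𝔛_[0]^j}`. -/
noncomputable def Xgrade0 (j : ℕ) (y : ℝ → ℝ) : ℝ :=
  Real.sqrt (∑ ℓ ∈ Finset.range (j+1), (bra0 ℓ y)^2)

/-- Graded norm `‖y‖_{𝔛_[1]^j}`. -/
noncomputable def Xgrade1 (N : ℝ) (j : ℕ) (y : ℝ → ℝ) : ℝ :=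
  Real.sqrt (∑ ℓ ∈ Finset.range (j+1), (bra1 N ℓ y)^2)

/-! On `[1/3, 2/3]`, where all the functions involved are supported, the weight `x^{3/2}` and the
factor `√x` of `Ḋ_[0]` are at most `1`, while `(1-x)^{N/2-1}` and `√(1-x)` are bounded below by
positive constants. So it suffices to bound each `Δ_[0]^m y` and `(Δ_[0]^m y)'` pointwise on
`[1/3, 2/3]` by the `Δ_[1]^i y` and `(Δ_[1]^i y)'` of no higher order, and to integrate.

Both operators have the form `(α + β x) ∂² + b ∂`. Differentiating, `∂^r Δ_[0]^m y` is a bounded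
combination of `y, y', …, y^{(2m+r)}`. Conversely, the leading coefficient `1 - x` of `Δ_[1]` is at
least `1/3` there, so `∂^{r+2} Δ_[1]^m y` can be solved from `∂^r Δ_[1]^{m+1} y` and
`∂^{r+1} Δ_[1]^m y`; by induction on `r`, `y^{(k)}` is a bounded combination of the `Δ_[1]^i y`
and `(Δ_[1]^i y)'` of order at most `k`. -/

open Function
open scoped ContDiff

theorem abs_le_sum_range_abs (f : ℕ → ℝ) {i n : ℕ} (h : i < n) :
    |f i| ≤ ∑ k ∈ Finset.range n, |f k| :=
  Finset.single_le_sum (fun k _ => abs_nonneg (f k)) (Finset.mem_range.2 h)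

theorem sum_range_abs_le_of_le (f : ℕ → ℝ) {m n : ℕ} (h : m ≤ n) :
    ∑ k ∈ Finset.range m, |f k| ≤ ∑ k ∈ Finset.range n, |f k| :=
  Finset.sum_le_sum_of_subset_of_nonneg (Finset.range_subset_range.2 h) fun _ _ _ => abs_nonneg _

noncomputable def affineDiffOp (α β b : ℝ) (y : ℝ → ℝ) : ℝ → ℝ := fun x =>
  (α + β * x) * deriv (deriv y) x + b * deriv y x

theorem Delta0_eq_affineDiffOp : Delta0 = affineDiffOp 0 1 (5 / 2) := by
  funext y x
  simp [Delta0, affineDiffOp]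

theorem Delta1_eq_affineDiffOp (N : ℝ) : Delta1 N = affineDiffOp 1 (-1) (-(N / 2)) := by
  funext y x
  simp only [Delta1, affineDiffOp]
  ring

section AffineDiffOp

variable {α β b : ℝ} {s : Set ℝ}

theorem contDiff_affineDiffOp {y : ℝ → ℝ} (hy : ContDiff ℝ ∞ y) :
    ContDiff ℝ ∞ (affineDiffOp α β b y) := by
  have h₁ := (contDiff_infty_iff_deriv.mp hy).2
  have h₂ := (contDiff_infty_iff_deriv.mp h₁).2
  exact ((contDiff_const.add (contDiff_const.mul contDiff_id)).mul h₂).add (contDiff_const.mul h₁)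

theorem contDiff_iterate_affineDiffOp {y : ℝ → ℝ} (hy : ContDiff ℝ ∞ y) (m : ℕ) :
    ContDiff ℝ ∞ ((affineDiffOp α β b)^[m] y) :=
  Iterate.rec _ hy (fun _ => contDiff_affineDiffOp) m

theorem support_affineDiffOp_subset (y : ℝ → ℝ) :
    support (affineDiffOp α β b y) ⊆ tsupport y := by
  refine (support_add _ _).trans (union_subset ?_ ?_)
  · exact (support_mul_subset_right _ _).trans
      (support_deriv_subset.trans tsupport_deriv_subset)
  · exact (support_mul_subset_right _ _).trans support_deriv_subset

theorem iteratedDeriv_affineDiffOp {y : ℝ → ℝ} (hy : ContDiff ℝ ∞ y) (r : ℕ) :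
    iteratedDeriv r (affineDiffOp α β b y) = fun x =>
      (α + β * x) * iteratedDeriv (r + 2) y x + (r * β + b) * iteratedDeriv (r + 1) y x := by
  induction r with
  | zero =>
    funext x
    simp [affineDiffOp, iteratedDeriv_succ]
  | succ r ih =>
    funext x
    have h (k : ℕ) : HasDerivAt (iteratedDeriv k y) (iteratedDeriv (k + 1) y x) x := by
      rw [iteratedDeriv_succ]
      exact (hy.differentiable_iteratedDeriv k (by exact_mod_cast WithTop.coe_lt_top _)
        x).hasDerivAt
    rw [iteratedDeriv_succ, ih]
    refine (((((hasDerivAt_id' x).const_mul β).const_add α).fun_mul (h _)).fun_add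
      ((h _).const_mul _)).deriv.trans ?_
    push_cast
    ring

theorem abs_iteratedDeriv_iterate_affineDiffOp_le (hs : Bornology.IsBounded s) (m r : ℕ) :
    ∃ C ≥ 0, ∀ y, ContDiff ℝ ∞ y → ∀ x ∈ s,
      |iteratedDeriv r ((affineDiffOp α β b)^[m] y) x| ≤
        C * ∑ k ∈ Finset.range (2 * m + r + 1), |iteratedDeriv k y x| := by
  obtain ⟨A, hA₀, hA⟩ : ∃ A ≥ 0, ∀ x ∈ s, |α + β * x| ≤ A := by
    obtain ⟨R, hR⟩ := isBounded_iff_forall_norm_le.mp hs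
    refine ⟨|α| + |β| * |R|, by positivity, fun x hx => (abs_add_le _ _).trans ?_⟩
    rw [abs_mul]
    exact add_le_add le_rfl (mul_le_mul_of_nonneg_left ((hR x hx).trans (le_abs_self R))
      (abs_nonneg β))
  induction m generalizing r with
  | zero => exact ⟨1, zero_le_one, fun y _ x _ => by
      simpa using abs_le_sum_range_abs (fun k => iteratedDeriv k y x) (Nat.lt_succ_self r)⟩
  | succ m ih =>
    obtain ⟨C₂, hC₂, h₂⟩ := ih (r + 2)
    obtain ⟨C₁, hC₁, h₁⟩ := ih (r + 1)
    refine ⟨A * C₂ + |r * β + b| * C₁, by positivity, fun y hy x hx => ?_⟩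
    set S := ∑ k ∈ Finset.range (2 * (m + 1) + r + 1), |iteratedDeriv k y x|
    have hS₂ : 2 * m + (r + 2) + 1 = 2 * (m + 1) + r + 1 := by ring
    have hS₁ := sum_range_abs_le_of_le (fun k => iteratedDeriv k y x)
      (show 2 * m + (r + 1) + 1 ≤ 2 * (m + 1) + r + 1 by omega)
    rw [iterate_succ_apply', iteratedDeriv_affineDiffOp
      (contDiff_iterate_affineDiffOp hy m)]
    calc _ ≤ |α + β * x| * |iteratedDeriv (r + 2) ((affineDiffOp α β b)^[m] y) x| +
          |r * β + b| * |iteratedDeriv (r + 1) ((affineDiffOp α β b)^[m] y) x| :=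
          (abs_add_le _ _).trans_eq (by rw [abs_mul, abs_mul])
      _ ≤ A * (C₂ * S) + |r * β + b| * (C₁ * S) := by
          gcongr
          · exact hA x hx
          · exact (h₂ y hy x hx).trans_eq (by rw [hS₂])
          · exact (h₁ y hy x hx).trans (mul_le_mul_of_nonneg_left hS₁ hC₁)
      _ = (A * C₂ + |r * β + b| * C₁) * S := by ring

end AffineDiffOp

noncomputable def gradedFamily (L D : (ℝ → ℝ) → ℝ → ℝ) (y : ℝ → ℝ) (ℓ : ℕ) : ℝ → ℝ :=
  if Even ℓ then L^[ℓ / 2] y else D (L^[ℓ / 2] y)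

section GradedFamily

variable {L D : (ℝ → ℝ) → ℝ → ℝ} {y : ℝ → ℝ}

@[simp]
theorem gradedFamily_two_mul (m : ℕ) : gradedFamily L D y (2 * m) = L^[m] y := by
  simp [gradedFamily]

@[simp]
theorem gradedFamily_two_mul_add_one (m : ℕ) :
    gradedFamily L D y (2 * m + 1) = D (L^[m] y) := by
  simp [gradedFamily, show (2 * m + 1) / 2 = m by omega]

theorem gradedFamily_deriv (ℓ : ℕ) :
    gradedFamily L deriv y ℓ = iteratedDeriv (ℓ % 2) (L^[ℓ / 2] y) := by
  obtain ⟨m, rfl | rfl⟩ := Nat.even_or_odd' ℓ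
  · simp
  · simp [show (2 * m + 1) / 2 = m by omega]

theorem continuous_gradedFamily (hL : ∀ g, ContDiff ℝ ∞ g → ContDiff ℝ ∞ (L g))
    (hD : ∀ g, ContDiff ℝ ∞ g → Continuous (D g)) (hy : ContDiff ℝ ∞ y) (ℓ : ℕ) :
    Continuous (gradedFamily L D y ℓ) := by
  have hLy : ContDiff ℝ ∞ (L^[ℓ / 2] y) := Iterate.rec _ hy hL _
  unfold gradedFamily
  split_ifs
  exacts [hLy.continuous, hD _ hLy]

theorem support_gradedFamily_subset (hL : ∀ g, support (L g) ⊆ tsupport g)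
    (hD : ∀ g, support (D g) ⊆ tsupport g) (ℓ : ℕ) :
    support (gradedFamily L D y ℓ) ⊆ tsupport y := by
  have hLy : tsupport (L^[ℓ / 2] y) ⊆ tsupport y := Iterate.rec
    (fun g => tsupport g ⊆ tsupport y) subset_rfl
    (fun g hg => (closure_minimal (hL g) isClosed_closure).trans hg) _
  unfold gradedFamily
  split_ifs
  exacts [subset_closure.trans hLy, (hD _).trans hLy]

end GradedFamily

theorem abs_iteratedDeriv_iterate_affineDiffOp_le_gradedFamily {α β b δ : ℝ} {s : Set ℝ}
    (hδ : 0 < δ) (hs : ∀ x ∈ s, δ ≤ |α + β * x|) (r : ℕ) :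
    ∀ m : ℕ, ∃ C ≥ 0, ∀ y, ContDiff ℝ ∞ y → ∀ x ∈ s,
      |iteratedDeriv r ((affineDiffOp α β b)^[m] y) x| ≤
        C * ∑ i ∈ Finset.range (2 * m + r + 1),
          |gradedFamily (affineDiffOp α β b) deriv y i x| := by
  induction r using Nat.twoStepInduction with
  | zero => exact fun m => ⟨1, zero_le_one, fun y _ x _ => by
      simpa using abs_le_sum_range_abs (fun i => gradedFamily (affineDiffOp α β b) deriv y i x)
        (Nat.lt_succ_self (2 * m))⟩
  | one => exact fun m => ⟨1, zero_le_one, fun y _ x _ => by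
      simpa using abs_le_sum_range_abs (fun i => gradedFamily (affineDiffOp α β b) deriv y i x)
        (Nat.lt_succ_self (2 * m + 1))⟩
  | more r ih₀ ih₁ =>
    intro m
    obtain ⟨C₂, hC₂, h₂⟩ := ih₀ (m + 1)
    obtain ⟨C₁, hC₁, h₁⟩ := ih₁ m
    refine ⟨(C₂ + |r * β + b| * C₁) / δ, by positivity, fun y hy x hx => ?_⟩
    set S := ∑ i ∈ Finset.range (2 * m + (r + 2) + 1),
      |gradedFamily (affineDiffOp α β b) deriv y i x|
    have hS₂ : 2 * (m + 1) + r + 1 = 2 * m + (r + 2) + 1 := by ring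
    have hS₁ := sum_range_abs_le_of_le (fun i => gradedFamily (affineDiffOp α β b) deriv y i x)
      (show 2 * m + (r + 1) + 1 ≤ 2 * m + (r + 2) + 1 by omega)
    set D₂ := iteratedDeriv (r + 2) ((affineDiffOp α β b)^[m] y) x
    set D₁ := iteratedDeriv (r + 1) ((affineDiffOp α β b)^[m] y) x
    -- invert the operator: its leading coefficient is at least `δ` in absolute value on `s`
    have hrec : iteratedDeriv r ((affineDiffOp α β b)^[m + 1] y) x =
        (α + β * x) * D₂ + (r * β + b) * D₁ := by
      rw [iterate_succ_apply',
        iteratedDeriv_affineDiffOp (contDiff_iterate_affineDiffOp hy m)]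
    have key : δ * |D₂| ≤ (C₂ + |r * β + b| * C₁) * S := calc
      δ * |D₂| ≤ |α + β * x| * |D₂| := by gcongr; exact hs x hx
      _ = |iteratedDeriv r ((affineDiffOp α β b)^[m + 1] y) x - (r * β + b) * D₁| := by
        rw [hrec, add_sub_cancel_right, abs_mul]
      _ ≤ |iteratedDeriv r ((affineDiffOp α β b)^[m + 1] y) x| + |r * β + b| * |D₁| := by
        rw [← abs_mul]; exact abs_sub _ _
      _ ≤ C₂ * S + |r * β + b| * (C₁ * S) := by
        gcongr
        · exact (h₂ y hy x hx).trans_eq (by rw [hS₂])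
        · exact (h₁ y hy x hx).trans (mul_le_mul_of_nonneg_left hS₁ hC₁)
      _ = (C₂ + |r * β + b| * C₁) * S := by ring
    rw [div_mul_eq_mul_div, le_div_iff₀ hδ]
    linarith

def TriangularBound (s : Set ℝ) (u v : (ℝ → ℝ) → ℕ → ℝ → ℝ) : Prop :=
  ∀ ℓ, ∃ C ≥ 0, ∀ y, ContDiff ℝ ∞ y → ∀ x ∈ s,
    |u y ℓ x| ≤ C * ∑ k ∈ Finset.range (ℓ + 1), |v y k x|

section TriangularBound

variable {s : Set ℝ} {α β b : ℝ}

theorem TriangularBound.trans {u v w : (ℝ → ℝ) → ℕ → ℝ → ℝ} (huv : TriangularBound s u v)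
    (hvw : TriangularBound s v w) : TriangularBound s u w := by
  intro ℓ
  obtain ⟨C, hC, hu⟩ := huv ℓ
  choose D hD hv using hvw
  refine ⟨C * ∑ k ∈ Finset.range (ℓ + 1), D k, mul_nonneg hC (Finset.sum_nonneg fun k _ => hD k),
    fun y hy x hx => (hu y hy x hx).trans ?_⟩
  rw [mul_assoc, Finset.sum_mul]
  gcongr with k hk
  refine (hv k y hy x hx).trans (mul_le_mul_of_nonneg_left (sum_range_abs_le_of_le _ ?_) (hD k))
  rw [Finset.mem_range] at hk
  omega

theorem triangularBound_gradedFamily_of_abs_le {L D D' : (ℝ → ℝ) → ℝ → ℝ} {K : ℝ} (hK : 1 ≤ K)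
    (hD : ∀ g, ∀ x ∈ s, |D g x| ≤ K * |D' g x|) :
    TriangularBound s (gradedFamily L D) (gradedFamily L D') := by
  refine fun ℓ => ⟨K, zero_le_one.trans hK, fun y _ x hx => ?_⟩
  have h : |gradedFamily L D y ℓ x| ≤ K * |gradedFamily L D' y ℓ x| := by
    obtain ⟨m, rfl | rfl⟩ := Nat.even_or_odd' ℓ
    · simpa using le_mul_of_one_le_left (abs_nonneg _) hK
    · simpa using hD _ x hx
  exact h.trans (mul_le_mul_of_nonneg_left
    (abs_le_sum_range_abs (fun k => gradedFamily L D' y k x) (Nat.lt_succ_self ℓ))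
    (zero_le_one.trans hK))

theorem triangularBound_gradedFamily_iteratedDeriv (hs : Bornology.IsBounded s) :
    TriangularBound s (gradedFamily (affineDiffOp α β b) deriv) fun y k => iteratedDeriv k y := by
  intro ℓ
  obtain ⟨C, hC, h⟩ :=
    abs_iteratedDeriv_iterate_affineDiffOp_le (α := α) (β := β) (b := b) hs (ℓ / 2) (ℓ % 2)
  have e : 2 * (ℓ / 2) + ℓ % 2 + 1 = ℓ + 1 := by omega
  exact ⟨C, hC, fun y hy x hx => by simpa only [gradedFamily_deriv, e] using h y hy x hx⟩

theorem triangularBound_iteratedDeriv_gradedFamily {δ : ℝ} (hδ : 0 < δ)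
    (hs : ∀ x ∈ s, δ ≤ |α + β * x|) :
    TriangularBound s (fun y k => iteratedDeriv k y) (gradedFamily (affineDiffOp α β b) deriv) :=
  fun ℓ => by
    simpa using abs_iteratedDeriv_iterate_affineDiffOp_le_gradedFamily hδ hs ℓ 0

end TriangularBound

theorem integral_sq_le_of_abs_le_sum {X : Type*} [MeasurableSpace X] {μ : Measure X}
    {f : X → ℝ} {g : ℕ → X → ℝ} {C : ℝ} {n : ℕ}
    (hg : ∀ i, Integrable (fun x => g i x ^ 2) μ)
    (h : ∀ᵐ x ∂μ, |f x| ≤ C * ∑ i ∈ Finset.range n, |g i x|) :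
    ∫ x, f x ^ 2 ∂μ ≤ C ^ 2 * n * ∑ i ∈ Finset.range n, ∫ x, g i x ^ 2 ∂μ := by
  rw [← integral_finsetSum _ fun i _ => hg i, ← integral_const_mul]
  refine integral_mono_of_nonneg (ae_of_all _ fun x => sq_nonneg _)
    ((integrable_finsetSum _ fun i _ => hg i).const_mul _) (h.mono fun x hx => ?_)
  have hcs := sq_sum_le_card_mul_sum_sq (s := Finset.range n) (f := fun i => |g i x|)
  simp only [Finset.card_range, sq_abs] at hcs
  calc f x ^ 2 = |f x| ^ 2 := (sq_abs _).symm
    _ ≤ (C * ∑ i ∈ Finset.range n, |g i x|) ^ 2 := pow_le_pow_left₀ (abs_nonneg _) hx 2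
    _ = C ^ 2 * (∑ i ∈ Finset.range n, |g i x|) ^ 2 := mul_pow _ _ _
    _ ≤ C ^ 2 * n * ∑ i ∈ Finset.range n, g i x ^ 2 := by
      rw [mul_assoc]; exact mul_le_mul_of_nonneg_left hcs (sq_nonneg C)

theorem intervalIntegral_eq_setIntegral_Icc_of_support_subset {f : ℝ → ℝ} {a b c d : ℝ}
    (hab : a ≤ b) (hac : a ≤ c) (hdb : d ≤ b) (hf : support f ⊆ Icc c d) :
    ∫ x in a..b, f x = ∫ x in Icc c d, f x := by
  rw [intervalIntegral.integral_of_le hab, ← integral_Icc_eq_integral_Ioc]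
  exact setIntegral_eq_of_subset_of_forall_sdiff_eq_zero measurableSet_Icc
    (Icc_subset_Icc hac hdb) fun x hx => notMem_support.1 fun h => hx.2 (hf h)

section Weights

variable {f : ℝ → ℝ}

theorem sq_base0_le (hf : Continuous f) (hs : support f ⊆ Icc (1 / 3) (2 / 3)) :
    base0 f ^ 2 ≤ ∫ x in Icc (1 / 3 : ℝ) (2 / 3), f x ^ 2 := by
  have hs' : support (fun x => f x ^ 2 * x ^ ((3 : ℝ) / 2)) ⊆ Icc (1 / 3) (2 / 3) :=
    (support_mul_subset_left _ _).trans ((support_pow _ two_ne_zero).trans_subset hs)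
  rw [base0, intervalIntegral_eq_setIntegral_Icc_of_support_subset (by norm_num) (by norm_num)
    le_rfl hs', Real.sq_sqrt (setIntegral_nonneg measurableSet_Icc fun x hx => by
      have := hx.1; positivity)]
  refine setIntegral_mono_on ((hf.pow 2).mul (Real.continuous_rpow_const (by norm_num))
    |>.integrableOn_Icc) ((hf.pow 2).integrableOn_Icc) measurableSet_Icc fun x hx => ?_
  exact mul_le_of_le_one_right (sq_nonneg _)
    (Real.rpow_le_one (by linarith [hx.1]) (by linarith [hx.2]) (by norm_num))

theorem sq_base1_ge {N : ℝ} (hN : 4 ≤ N) (hf : Continuous f)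
    (hs : support f ⊆ Icc (1 / 3) (2 / 3)) :
    (1 / 3 : ℝ) ^ (N / 2 - 1) * ∫ x in Icc (1 / 3 : ℝ) (2 / 3), f x ^ 2 ≤ base1 N f ^ 2 := by
  have hs' : support (fun x => f x ^ 2 * (1 - x) ^ (N / 2 - 1)) ⊆
      Icc (1 / 3) (2 / 3) :=
    (support_mul_subset_left _ _).trans ((support_pow _ two_ne_zero).trans_subset hs)
  rw [base1, intervalIntegral_eq_setIntegral_Icc_of_support_subset (by norm_num) le_rfl
    (by norm_num) hs', Real.sq_sqrt (setIntegral_nonneg measurableSet_Icc fun x hx => by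
      have : 0 ≤ 1 - x := by linarith [hx.2]
      positivity), ← integral_const_mul]
  refine setIntegral_mono_on (((hf.pow 2).integrableOn_Icc).const_mul _) ((hf.pow 2).mul
    ((Real.continuous_rpow_const (by linarith)).comp (continuous_const.sub continuous_id))
    |>.integrableOn_Icc) measurableSet_Icc fun x hx => ?_
  rw [mul_comm]
  exact mul_le_mul_of_nonneg_left (Real.rpow_le_rpow (by norm_num) (by linarith [hx.2])
    (by linarith)) (sq_nonneg _)

end Weights

theorem support_Ddot0_subset (g : ℝ → ℝ) : support (Ddot0 g) ⊆ tsupport g :=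
  (support_mul_subset_right _ _).trans support_deriv_subset

theorem support_Ddot1_subset (g : ℝ → ℝ) : support (Ddot1 g) ⊆ tsupport g :=
  (support_mul_subset_right _ _).trans support_deriv_subset

theorem continuous_Ddot0 {g : ℝ → ℝ} (hg : ContDiff ℝ ∞ g) : Continuous (Ddot0 g) :=
  Real.continuous_sqrt.mul (hg.continuous_deriv (by simp))

theorem continuous_Ddot1 {g : ℝ → ℝ} (hg : ContDiff ℝ ∞ g) : Continuous (Ddot1 g) :=
  (Real.continuous_sqrt.comp (continuous_const.sub continuous_id)).neg.mul
    (hg.continuous_deriv (by simp))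

theorem abs_Ddot0_le (g : ℝ → ℝ) {x : ℝ} (hx : x ≤ 1) : |Ddot0 g x| ≤ |deriv g x| := by
  rw [Ddot0, abs_mul, abs_of_nonneg (Real.sqrt_nonneg x)]
  exact mul_le_of_le_one_left (abs_nonneg _) (Real.sqrt_le_one.2 hx)

theorem abs_deriv_le_Ddot1 (g : ℝ → ℝ) {x : ℝ} (hx : x ≤ 2 / 3) :
    |deriv g x| ≤ 3 * |Ddot1 g x| := by
  have h : 1 / 3 ≤ Real.sqrt (1 - x) := Real.le_sqrt_of_sq_le (by linarith)
  rw [Ddot1, abs_mul, abs_neg, abs_of_nonneg (Real.sqrt_nonneg _), ← mul_assoc]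
  exact le_mul_of_one_le_left (abs_nonneg _) (by linarith)

local notation "𝒢₀" => gradedFamily (affineDiffOp 0 1 (5 / 2)) Ddot0

local notation "𝒢₁[" N "]" => gradedFamily (affineDiffOp 1 (-1) (-(N / 2))) Ddot1

theorem bra0_eq_base0_gradedFamily (ℓ : ℕ) (y : ℝ → ℝ) :
    bra0 ℓ y = base0 (𝒢₀ y ℓ) := by
  rw [bra0, gradedFamily, Delta0_eq_affineDiffOp]
  split_ifs <;> rfl

theorem bra1_eq_base1_gradedFamily (N : ℝ) (ℓ : ℕ) (y : ℝ → ℝ) :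
    bra1 N ℓ y = base1 N (𝒢₁[N] y ℓ) := by
  rw [bra1, gradedFamily, Delta1_eq_affineDiffOp]
  split_ifs <;> rfl

theorem triangularBound_gradedFamily_Ddot0_Ddot1 (N : ℝ) :
    TriangularBound (Icc (1 / 3) (2 / 3)) 𝒢₀ 𝒢₁[N] :=
  (triangularBound_gradedFamily_of_abs_le le_rfl fun g x hx => by
      simpa using abs_Ddot0_le g (by linarith [hx.2])).trans <|
    (triangularBound_gradedFamily_iteratedDeriv (Metric.isBounded_Icc _ _)).trans <|
    (triangularBound_iteratedDeriv_gradedFamily (δ := 1 / 3) (by norm_num) fun x hx => by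
      rw [abs_of_nonneg (by linarith [hx.2])]; linarith [hx.2]).trans <|
    triangularBound_gradedFamily_of_abs_le (by norm_num) fun g x hx => abs_deriv_le_Ddot1 g hx.2

theorem sq_bra0_le_sum_sq_bra1 {N : ℝ} (hN : 4 ≤ N) (ℓ : ℕ) :
    ∃ C ≥ 0, ∀ y, ContDiff ℝ ∞ y → tsupport y ⊆ Icc (1 / 3) (2 / 3) →
      bra0 ℓ y ^ 2 ≤ C * ∑ i ∈ Finset.range (ℓ + 1), bra1 N i y ^ 2 := by
  obtain ⟨C, hC, h⟩ := triangularBound_gradedFamily_Ddot0_Ddot1 N ℓ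
  set c : ℝ := (1 / 3 : ℝ) ^ (N / 2 - 1)
  have hc : 0 < c := by positivity
  refine ⟨C ^ 2 * (ℓ + 1) / c, by positivity, fun y hy hsupp => ?_⟩
  have hcont₀ (i : ℕ) : Continuous (𝒢₀ y i) :=
    continuous_gradedFamily (fun _ => contDiff_affineDiffOp) (fun _ => continuous_Ddot0) hy i
  have hcont₁ (i : ℕ) : Continuous (𝒢₁[N] y i) :=
    continuous_gradedFamily (fun _ => contDiff_affineDiffOp) (fun _ => continuous_Ddot1) hy i
  have hsupp₀ (i : ℕ) : support (𝒢₀ y i) ⊆ Icc (1 / 3) (2 / 3) :=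
    (support_gradedFamily_subset support_affineDiffOp_subset support_Ddot0_subset i).trans hsupp
  have hsupp₁ (i : ℕ) : support (𝒢₁[N] y i) ⊆ Icc (1 / 3) (2 / 3) :=
    (support_gradedFamily_subset support_affineDiffOp_subset support_Ddot1_subset i).trans hsupp
  calc bra0 ℓ y ^ 2
      ≤ ∫ x in Icc (1 / 3 : ℝ) (2 / 3), 𝒢₀ y ℓ x ^ 2 := by
        rw [bra0_eq_base0_gradedFamily]; exact sq_base0_le (hcont₀ ℓ) (hsupp₀ ℓ)
    _ ≤ C ^ 2 * (ℓ + 1 : ℕ) * ∑ i ∈ Finset.range (ℓ + 1),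
          ∫ x in Icc (1 / 3 : ℝ) (2 / 3), 𝒢₁[N] y i x ^ 2 :=
        integral_sq_le_of_abs_le_sum (fun i => ((hcont₁ i).pow 2).integrableOn_Icc)
          (ae_restrict_of_forall_mem measurableSet_Icc (h y hy))
    _ ≤ C ^ 2 * (ℓ + 1 : ℕ) * ∑ i ∈ Finset.range (ℓ + 1), bra1 N i y ^ 2 / c := by
        gcongr with i
        rw [le_div_iff₀' hc, bra1_eq_base1_gradedFamily]
        exact sq_base1_ge hN (hcont₁ i) (hsupp₁ i)
    _ = C ^ 2 * (ℓ + 1) / c * ∑ i ∈ Finset.range (ℓ + 1), bra1 N i y ^ 2 := by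
        rw [← Finset.sum_div]; push_cast; ring

theorem sqrt_sum_sq_le_of_forall_sq_le {a b C : ℕ → ℝ} (hC : ∀ ℓ, 0 ≤ C ℓ)
    (h : ∀ ℓ, a ℓ ^ 2 ≤ C ℓ * ∑ i ∈ Finset.range (ℓ + 1), b i ^ 2) (j : ℕ) :
    √(∑ ℓ ∈ Finset.range (j + 1), a ℓ ^ 2) ≤
      √(∑ ℓ ∈ Finset.range (j + 1), C ℓ) * √(∑ i ∈ Finset.range (j + 1), b i ^ 2) := by
  rw [← Real.sqrt_mul (Finset.sum_nonneg fun ℓ _ => hC ℓ), Finset.sum_mul]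
  refine Real.sqrt_le_sqrt (Finset.sum_le_sum fun ℓ hℓ => (h ℓ).trans ?_)
  refine mul_le_mul_of_nonneg_left (Finset.sum_le_sum_of_subset_of_nonneg
    (Finset.range_subset_range.2 ?_) fun _ _ _ => sq_nonneg _) (hC ℓ)
  rw [Finset.mem_range] at hℓ
  omega

/-- **Proposition 11**: for smooth functions supported in `[1/3, 2/3]`,
`‖y‖_{𝔛_[0]^j} ≤ C ‖y‖_{𝔛_[1]^j}`. -/
theorem weighted_grading_comparison (N : ℝ) (hN : 4 ≤ N) (j : ℕ) :
    ∃ C > 0, ∀ y : ℝ → ℝ, ContDiff ℝ (⊤:ℕ∞) y →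
      tsupport y ⊆ Icc (1/3) (2/3) →
      Xgrade0 j y ≤ C * Xgrade1 N j y := by
  choose C hC₀ hC using sq_bra0_le_sum_sq_bra1 hN
  refine ⟨√(∑ ℓ ∈ Finset.range (j + 1), C ℓ) + 1, by positivity, fun y hy hsupp => ?_⟩
  calc Xgrade0 j y ≤ √(∑ ℓ ∈ Finset.range (j + 1), C ℓ) * Xgrade1 N j y :=
        sqrt_sum_sq_le_of_forall_sq_le hC₀ (fun ℓ => hC ℓ y hy hsupp) j
    _ ≤ _ := mul_le_mul_of_nonneg_right (le_add_of_nonneg_right zero_le_one) (Real.sqrt_nonneg _)
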